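/- arXiv:2603.28764 — 2 statements merged into one kernel-verified Lean document; each statement's English description precedes it below -/
import Mathlib

section
/- The spectral ratio satisfies the triangle inequality: for symmetric positive definite m×m matrices G, G', G'', d_SR(G, G'') ≤ d_SR(G, G') + d_SR(G', G''). -/
open Matrix

/-- The set of generalized eigenvalues of the pair `(M, N)`. -/
def genEig {m : ℕ} (M N : Matrix (Fin m) (Fin m) ℝ) : Set ℝ :=
  {lam | ∃ v : Fin m → ℝ, v ≠ 0 ∧ M.mulVec v = lam • N.mulVec v}

/-- The spectral ratio `d_SR(G,G') = 1 - √(λ_min/λ_max)`. -/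
noncomputable def dSR {m : ℕ} (G G' : Matrix (Fin m) (Fin m) ℝ) : ℝ :=
  1 - Real.sqrt (sInf (genEig G G') / sSup (genEig G G'))

/-!
The extreme generalized eigenvalues of a positive definite pencil `(M, N)` are the extreme values
of the Rayleigh quotient `vᵀ M v / vᵀ N v`. Passing through `G'` in the Rayleigh quotient gives
`λ_max(G, G'') ≤ λ_max(G, G') λ_max(G', G'')` and `λ_min(G, G') λ_min(G', G'') ≤ λ_min(G, G'')`,
so the ratios `r = λ_min / λ_max ∈ (0, 1]` satisfy `r(G, G') r(G', G'') ≤ r(G, G'')`. The triangle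
inequality then reduces to `1 - √(x y) ≤ (1 - √x) + (1 - √y)`, i.e. `(1 - √x) (1 - √y) ≥ 0`.
-/

theorem LinearMap.IsSymmetric.exists_hasEigenvalue_forall_inner_le {E : Type*}
    [NormedAddCommGroup E] [InnerProductSpace ℝ E] [FiniteDimensional ℝ E] [Nontrivial E]
    {T : E →ₗ[ℝ] E} (hT : T.IsSymmetric) :
    ∃ μ : ℝ, Module.End.HasEigenvalue T μ ∧ ∀ x, inner ℝ (T x) x ≤ μ * ‖x‖ ^ 2 := by
  refine ⟨_, hT.hasEigenvalue_iSup_of_finiteDimensional, fun x => ?_⟩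
  rcases eq_or_ne x 0 with rfl | hx
  · simp
  have hbdd : BddAbove (Set.range fun y : {y : E // y ≠ 0} ↦
      RCLike.re (inner ℝ (T y) (y : E)) / ‖(y : E)‖ ^ 2) :=
    ⟨_, by
      rintro _ ⟨y, rfl⟩
      exact (abs_le.mp ((LinearMap.toContinuousLinearMap T).rayleighQuotient_le_norm y)).2⟩
  rw [← div_le_iff₀ (by positivity)]
  exact le_ciSup hbdd ⟨x, hx⟩

namespace Matrix

variable {n R : Type*} [Fintype n] [CommSemiring R]

theorem dotProduct_mulVec_mulVec_conj (M P : Matrix n n R) (w : n → R) :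
    (P *ᵥ w) ⬝ᵥ M *ᵥ (P *ᵥ w) = w ⬝ᵥ (Pᵀ * M * P) *ᵥ w := by
  rw [← mulVec_mulVec, ← mulVec_mulVec, dotProduct_mulVec w, vecMul_transpose]

theorem dotProduct_mulVec_eq_mul_of_mulVec_eq_smul {M N : Matrix n n R} {v : n → R} {l : R}
    (h : M *ᵥ v = l • N *ᵥ v) : v ⬝ᵥ M *ᵥ v = l * (v ⬝ᵥ N *ᵥ v) := by
  rw [h, dotProduct_smul, smul_eq_mul]

end Matrix

section genEig

variable {m : ℕ} {M N : Matrix (Fin m) (Fin m) ℝ}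

theorem genEig_fin_zero (M N : Matrix (Fin 0) (Fin 0) ℝ) : genEig M N = ∅ :=
  Set.eq_empty_of_forall_notMem fun _ ⟨v, hv, _⟩ => hv (Subsingleton.elim v 0)

theorem genEig_conj {P : Matrix (Fin m) (Fin m) ℝ} (hP : IsUnit P) :
    genEig (Pᵀ * M * P) (Pᵀ * N * P) = genEig M N := by
  have hPinj := mulVec_injective_of_isUnit hP
  have hPtinj := mulVec_injective_of_isUnit (P.isUnit_transpose.mpr hP)
  ext l
  simp only [genEig, Set.mem_ofPred_eq]
  refine ((mulVec_surjective_iff_isUnit.mpr hP).exists.trans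
    (exists_congr fun v => and_congr (hPinj.ne_iff' (mulVec_zero P)) ?_)).symm
  rw [← mulVec_mulVec, ← mulVec_mulVec, ← mulVec_mulVec, ← mulVec_mulVec,
    ← mulVec_smul Pᵀ, hPtinj.eq_iff]

theorem genEig_neg_left : genEig (-M) N = -genEig M N := by
  ext l
  simp only [genEig, Set.mem_neg, Set.mem_ofPred_eq, neg_mulVec, neg_smul, neg_eq_iff_eq_neg]

theorem pos_of_mem_genEig (hM : M.PosDef) (hN : N.PosSemidef) {l : ℝ} (hl : l ∈ genEig M N) :
    0 < l := by
  obtain ⟨v, hv, h⟩ := hl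
  have hMv : 0 < v ⬝ᵥ M *ᵥ v := by simpa using hM.dotProduct_mulVec_pos hv
  have hNv : 0 ≤ v ⬝ᵥ N *ᵥ v := by simpa using hN.dotProduct_mulVec_nonneg v
  rw [dotProduct_mulVec_eq_mul_of_mulVec_eq_smul h] at hMv
  exact pos_of_mul_pos_left hMv hNv

theorem le_of_mem_genEig (hN : N.PosDef) {μ l : ℝ}
    (hμ : ∀ v, v ⬝ᵥ M *ᵥ v ≤ μ * (v ⬝ᵥ N *ᵥ v)) (hl : l ∈ genEig M N) : l ≤ μ := by
  obtain ⟨v, hv, h⟩ := hl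
  have hNv : 0 < v ⬝ᵥ N *ᵥ v := by simpa using hN.dotProduct_mulVec_pos hv
  have := hμ v
  rw [dotProduct_mulVec_eq_mul_of_mulVec_eq_smul h] at this
  exact le_of_mul_le_mul_right this hNv

theorem ge_of_mem_genEig (hN : N.PosDef) {μ l : ℝ}
    (hμ : ∀ v, μ * (v ⬝ᵥ N *ᵥ v) ≤ v ⬝ᵥ M *ᵥ v) (hl : l ∈ genEig M N) : μ ≤ l := by
  obtain ⟨v, hv, h⟩ := hl
  have hNv : 0 < v ⬝ᵥ N *ᵥ v := by simpa using hN.dotProduct_mulVec_pos hv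
  have := hμ v
  rw [dotProduct_mulVec_eq_mul_of_mulVec_eq_smul h] at this
  exact le_of_mul_le_mul_right this hNv

noncomputable def genEigRatio (M N : Matrix (Fin m) (Fin m) ℝ) : ℝ :=
  sInf (genEig M N) / sSup (genEig M N)

variable [NeZero m]

theorem Matrix.IsHermitian.exists_mem_genEig_one_forall_le {S : Matrix (Fin m) (Fin m) ℝ}
    (hS : S.IsHermitian) : ∃ μ ∈ genEig S 1, ∀ v, v ⬝ᵥ S *ᵥ v ≤ μ * (v ⬝ᵥ v) := by
  obtain ⟨μ, hμ, hle⟩ :=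
    (isSymmetric_toEuclideanLin_iff.mpr hS).exists_hasEigenvalue_forall_inner_le
  obtain ⟨w, hw⟩ := hμ.exists_hasEigenvector
  refine ⟨μ, ⟨WithLp.ofLp w, by simpa using hw.2, ?_⟩, fun v => ?_⟩
  · simpa using congrArg WithLp.ofLp hw.apply_eq_smul
  · have := hle (WithLp.toLp 2 v)
    rwa [← real_inner_self_eq_norm_sq, EuclideanSpace.inner_toLp_toLp,
      EuclideanSpace.inner_eq_star_dotProduct] at this

open scoped MatrixOrder in
theorem exists_mem_genEig_forall_le (hM : M.IsHermitian) (hN : N.PosDef) :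
    ∃ μ ∈ genEig M N, ∀ v, v ⬝ᵥ M *ᵥ v ≤ μ * (v ⬝ᵥ N *ᵥ v) := by
  -- With `N = Bᵀ B`, the substitution `v = B⁻¹ w` turns the pencil `(M, N)` into `(B⁻ᵀ M B⁻¹, 1)`.
  obtain ⟨_, ⟨u, rfl⟩, rfl⟩ :=
    CStarAlgebra.isStrictlyPositive_iff_eq_star_mul_self.mp hN.isStrictlyPositive
  set B : Matrix (Fin m) (Fin m) ℝ := ↑u
  set P : Matrix (Fin m) (Fin m) ℝ := ↑u⁻¹
  have hPN : Pᵀ * (star B * B) * P = 1 := by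
    calc Pᵀ * (star B * B) * P = (B * P)ᵀ * (B * P) := by
          simp only [star_eq_conjTranspose, conjTranspose_eq_transpose_of_trivial, transpose_mul,
            mul_assoc]
      _ = 1 := by rw [u.mul_inv, transpose_one, one_mul]
  have hS : (Pᵀ * M * P).IsHermitian := by
    simpa [conjTranspose_eq_transpose_of_trivial] using isHermitian_conjTranspose_mul_mul P hM
  obtain ⟨μ, hμ, hle⟩ := hS.exists_mem_genEig_one_forall_le
  rw [← hPN, genEig_conj u⁻¹.isUnit] at hμ
  refine ⟨μ, hμ, fun v => ?_⟩
  have hv : P *ᵥ (B *ᵥ v) = v := by rw [mulVec_mulVec, u.inv_mul, one_mulVec]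
  have hMv : (B *ᵥ v) ⬝ᵥ (Pᵀ * M * P) *ᵥ (B *ᵥ v) = v ⬝ᵥ M *ᵥ v := by
    rw [← dotProduct_mulVec_mulVec_conj, hv]
  have hNv : (B *ᵥ v) ⬝ᵥ (B *ᵥ v) = v ⬝ᵥ (star B * B) *ᵥ v := by
    simpa [star_eq_conjTranspose, conjTranspose_eq_transpose_of_trivial] using
      dotProduct_mulVec_mulVec_conj 1 B v
  simpa only [hMv, hNv] using hle (B *ᵥ v)

theorem exists_mem_genEig_forall_ge (hM : M.IsHermitian) (hN : N.PosDef) :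
    ∃ μ ∈ genEig M N, ∀ v, μ * (v ⬝ᵥ N *ᵥ v) ≤ v ⬝ᵥ M *ᵥ v := by
  obtain ⟨μ, hμ, hle⟩ := exists_mem_genEig_forall_le hM.neg hN
  refine ⟨-μ, by rwa [genEig_neg_left, Set.mem_neg] at hμ, fun v => ?_⟩
  have := hle v
  rw [neg_mulVec, dotProduct_neg] at this
  linarith

theorem sSup_genEig_spec (hM : M.IsHermitian) (hN : N.PosDef) :
    sSup (genEig M N) ∈ genEig M N ∧
      ∀ v, v ⬝ᵥ M *ᵥ v ≤ sSup (genEig M N) * (v ⬝ᵥ N *ᵥ v) := by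
  obtain ⟨μ, hμ, hle⟩ := exists_mem_genEig_forall_le hM hN
  rw [IsGreatest.csSup_eq ⟨hμ, fun _ => le_of_mem_genEig hN hle⟩]
  exact ⟨hμ, hle⟩

theorem sInf_genEig_spec (hM : M.IsHermitian) (hN : N.PosDef) :
    sInf (genEig M N) ∈ genEig M N ∧
      ∀ v, sInf (genEig M N) * (v ⬝ᵥ N *ᵥ v) ≤ v ⬝ᵥ M *ᵥ v := by
  obtain ⟨μ, hμ, hge⟩ := exists_mem_genEig_forall_ge hM hN
  rw [IsLeast.csInf_eq ⟨hμ, fun _ => ge_of_mem_genEig hN hge⟩]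
  exact ⟨hμ, hge⟩

theorem sInf_genEig_pos (hM : M.PosDef) (hN : N.PosDef) : 0 < sInf (genEig M N) :=
  pos_of_mem_genEig hM hN.posSemidef (sInf_genEig_spec hM.1 hN).1

theorem sInf_genEig_le_sSup (hM : M.IsHermitian) (hN : N.PosDef) :
    sInf (genEig M N) ≤ sSup (genEig M N) :=
  le_of_mem_genEig hN (sSup_genEig_spec hM hN).2 (sInf_genEig_spec hM hN).1

theorem sSup_genEig_pos (hM : M.PosDef) (hN : N.PosDef) : 0 < sSup (genEig M N) :=
  (sInf_genEig_pos hM hN).trans_le (sInf_genEig_le_sSup hM.1 hN)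

variable {G G' G'' : Matrix (Fin m) (Fin m) ℝ}

theorem sSup_genEig_le_mul (hG : G.PosDef) (hG' : G'.PosDef) (hG'' : G''.PosDef) :
    sSup (genEig G G'') ≤ sSup (genEig G G') * sSup (genEig G' G'') := by
  obtain ⟨⟨v, hv, hev⟩, -⟩ := sSup_genEig_spec hG.1 hG''
  have hv'' : 0 < v ⬝ᵥ G'' *ᵥ v := by simpa using hG''.dotProduct_mulVec_pos hv
  refine le_of_mul_le_mul_right ?_ hv''
  calc sSup (genEig G G'') * (v ⬝ᵥ G'' *ᵥ v) = v ⬝ᵥ G *ᵥ v :=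
        (dotProduct_mulVec_eq_mul_of_mulVec_eq_smul hev).symm
    _ ≤ sSup (genEig G G') * (v ⬝ᵥ G' *ᵥ v) := (sSup_genEig_spec hG.1 hG').2 v
    _ ≤ sSup (genEig G G') * (sSup (genEig G' G'') * (v ⬝ᵥ G'' *ᵥ v)) :=
        mul_le_mul_of_nonneg_left ((sSup_genEig_spec hG'.1 hG'').2 v)
          (sSup_genEig_pos hG hG').le
    _ = _ := (mul_assoc _ _ _).symm

theorem mul_le_sInf_genEig (hG : G.PosDef) (hG' : G'.PosDef) (hG'' : G''.PosDef) :
    sInf (genEig G G') * sInf (genEig G' G'') ≤ sInf (genEig G G'') := by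
  obtain ⟨⟨v, hv, hev⟩, -⟩ := sInf_genEig_spec hG.1 hG''
  have hv'' : 0 < v ⬝ᵥ G'' *ᵥ v := by simpa using hG''.dotProduct_mulVec_pos hv
  refine le_of_mul_le_mul_right ?_ hv''
  calc sInf (genEig G G') * sInf (genEig G' G'') * (v ⬝ᵥ G'' *ᵥ v)
      = sInf (genEig G G') * (sInf (genEig G' G'') * (v ⬝ᵥ G'' *ᵥ v)) := mul_assoc _ _ _
    _ ≤ sInf (genEig G G') * (v ⬝ᵥ G' *ᵥ v) :=
        mul_le_mul_of_nonneg_left ((sInf_genEig_spec hG'.1 hG'').2 v)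
          (sInf_genEig_pos hG hG').le
    _ ≤ v ⬝ᵥ G *ᵥ v := (sInf_genEig_spec hG.1 hG').2 v
    _ = sInf (genEig G G'') * (v ⬝ᵥ G'' *ᵥ v) := dotProduct_mulVec_eq_mul_of_mulVec_eq_smul hev

theorem genEigRatio_nonneg (hM : M.PosDef) (hN : N.PosDef) : 0 ≤ genEigRatio M N :=
  div_nonneg (sInf_genEig_pos hM hN).le (sSup_genEig_pos hM hN).le

theorem genEigRatio_le_one (hM : M.PosDef) (hN : N.PosDef) : genEigRatio M N ≤ 1 :=
  div_le_one_of_le₀ (sInf_genEig_le_sSup hM.1 hN) (sSup_genEig_pos hM hN).le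

theorem genEigRatio_mul_le (hG : G.PosDef) (hG' : G'.PosDef) (hG'' : G''.PosDef) :
    genEigRatio G G' * genEigRatio G' G'' ≤ genEigRatio G G'' := by
  rw [genEigRatio, genEigRatio, genEigRatio, div_mul_div_comm]
  exact div_le_div₀ (sInf_genEig_pos hG hG'').le (mul_le_sInf_genEig hG hG' hG'')
    (sSup_genEig_pos hG hG'') (sSup_genEig_le_mul hG hG' hG'')

end genEig

theorem one_sub_sqrt_le_add_of_mul_le {x y z : ℝ} (hx₀ : 0 ≤ x) (hx₁ : x ≤ 1) (hy₁ : y ≤ 1)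
    (hxyz : x * y ≤ z) : 1 - √z ≤ (1 - √x) + (1 - √y) := by
  have hsqrt : √x * √y ≤ √z := by rw [← Real.sqrt_mul hx₀]; exact Real.sqrt_le_sqrt hxyz
  have hprod : 0 ≤ (1 - √x) * (1 - √y) :=
    mul_nonneg (sub_nonneg.mpr (Real.sqrt_le_one.mpr hx₁))
      (sub_nonneg.mpr (Real.sqrt_le_one.mpr hy₁))
  nlinarith

/-- the spectral ratio satisfies the triangle inequality. -/
theorem dSR_triangle {m : ℕ} (G G' G'' : Matrix (Fin m) (Fin m) ℝ)
    (hG : G.PosDef) (hG' : G'.PosDef) (hG'' : G''.PosDef) :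
    dSR G G'' ≤ dSR G G' + dSR G' G'' := by
  rcases eq_zero_or_neZero m with rfl | _
  · simp [dSR, genEig_fin_zero]
  exact one_sub_sqrt_le_add_of_mul_le (genEigRatio_nonneg hG hG') (genEigRatio_le_one hG hG')
    (genEigRatio_le_one hG' hG'') (genEigRatio_mul_le hG hG' hG'')
end

section
/- Let G, G'' be symmetric positive definite m×m matrices with (positive) eigenvalues; let a = √(λ_max(G)), b = √(λ_min(G)), a'' = √(λ_max(G'')), b'' = √(λ_min(G'')). Then the generalized eigenvalue-based quantity d_SR(G, G'') = 1 - √(λ_min(G''^{-1}G)/λ_max(G''^{-1}G)) satisfies d_SR(G, G'') ≤ 1 - (b/a)·(b''/a''). -/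
open Matrix

/-!
Writing a generalized eigenvalue as a ratio of Rayleigh quotients, `μ = vᵀGv / vᵀG''v`, the
Rayleigh bounds `λ_min ‖v‖² ≤ vᵀAv ≤ λ_max ‖v‖²` trap every generalized eigenvalue in
`[b² / a''², a² / b''²]`, so `λ_min(G''⁻¹G) / λ_max(G''⁻¹G) ≥ (b b'' / (a a''))²`. The set of
generalized eigenvalues is nonempty because the eigenvalues of the symmetric matrix
`G''^{-1/2} G G''^{-1/2}` belong to it.
-/

open scoped MatrixOrder

namespace Matrix

variable {n : Type*} [Fintype n] [DecidableEq n] {A : Matrix n n ℝ}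

lemma IsHermitian.iInf_eigenvalues_mul_dotProduct_le (hA : A.IsHermitian) (v : n → ℝ) :
    (⨅ i, hA.eigenvalues i) * (v ⬝ᵥ v) ≤ v ⬝ᵥ A *ᵥ v := by
  have hle : algebraMap ℝ _ (⨅ i, hA.eigenvalues i) ≤ A :=
    algebraMap_le_of_le_spectrum (by
      rw [hA.spectrum_real_eq_range_eigenvalues]
      rintro _ ⟨i, rfl⟩
      exact ciInf_le (Set.finite_range _).bddBelow i) hA.isSelfAdjoint
  have := (le_iff.mp hle).dotProduct_mulVec_nonneg v
  simpa [Algebra.algebraMap_eq_smul_one, sub_mulVec, smul_mulVec, dotProduct_sub] using this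

lemma IsHermitian.dotProduct_le_iSup_eigenvalues_mul (hA : A.IsHermitian) (v : n → ℝ) :
    v ⬝ᵥ A *ᵥ v ≤ (⨆ i, hA.eigenvalues i) * (v ⬝ᵥ v) := by
  have hle : A ≤ algebraMap ℝ _ (⨆ i, hA.eigenvalues i) :=
    le_algebraMap_of_spectrum_le (by
      rw [hA.spectrum_real_eq_range_eigenvalues]
      rintro _ ⟨i, rfl⟩
      exact le_ciSup (Set.finite_range _).bddAbove i) hA.isSelfAdjoint
  have := (le_iff.mp hle).dotProduct_mulVec_nonneg v
  simpa [Algebra.algebraMap_eq_smul_one, sub_mulVec, smul_mulVec, dotProduct_sub] using this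

variable [Nonempty n]

lemma PosDef.iInf_eigenvalues_pos (hA : A.PosDef) : 0 < ⨅ i, hA.1.eigenvalues i := by
  obtain ⟨i, hi⟩ := exists_eq_ciInf_of_finite (f := hA.1.eigenvalues)
  exact hi ▸ hA.eigenvalues_pos i

lemma PosDef.iSup_eigenvalues_pos (hA : A.PosDef) : 0 < ⨆ i, hA.1.eigenvalues i := by
  obtain ⟨i, hi⟩ := exists_eq_ciSup_of_finite (f := hA.1.eigenvalues)
  exact hi ▸ hA.eigenvalues_pos i

end Matrix

lemma div_le_sInf_div_sSup {S : Set ℝ} {a b : ℝ} (hS : S.Nonempty) (hSab : S ⊆ Set.Icc a b)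
    (ha : 0 < a) : a / b ≤ sInf S / sSup S := by
  obtain ⟨x, hx⟩ := hS
  have hInf : a ≤ sInf S := le_csInf ⟨x, hx⟩ fun y hy => (hSab hy).1
  have hSup : sSup S ≤ b := csSup_le ⟨x, hx⟩ fun y hy => (hSab hy).2
  have hSup_pos : 0 < sSup S :=
    ha.trans_le <| (hSab hx).1.trans <| le_csSup (bddAbove_Icc.mono hSab) hx
  exact div_le_div₀ (ha.le.trans hInf) hInf hSup_pos hSup

section genEig

variable {m : ℕ} {M N : Matrix (Fin m) (Fin m) ℝ}

lemma mem_genEig_of_mulVec_eq_smul {P : Matrix (Fin m) (Fin m) ℝ} (hP : N * P * P = 1)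
    {μ : ℝ} {w : Fin m → ℝ} (hw : w ≠ 0) (hμ : (P * M * P) *ᵥ w = μ • w) :
    μ ∈ genEig M N := by
  refine ⟨P *ᵥ w, fun h => hw ?_, ?_⟩
  · rw [← one_mulVec w, ← hP, ← mulVec_mulVec, h, mulVec_zero]
  · calc M *ᵥ (P *ᵥ w) = (N * P * P) *ᵥ (M *ᵥ (P *ᵥ w)) := by rw [hP, one_mulVec]
      _ = (N * P) *ᵥ ((P * M * P) *ᵥ w) := by simp only [mulVec_mulVec, Matrix.mul_assoc]
      _ = μ • N *ᵥ (P *ᵥ w) := by rw [hμ, mulVec_smul, mulVec_mulVec]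

lemma genEig_nonempty [NeZero m] (hM : M.IsHermitian) (hN : N.PosDef) :
    (genEig M N).Nonempty := by
  set P := CFC.sqrt N⁻¹
  have hP : P.IsHermitian := (CFC.sqrt_nonneg N⁻¹).posSemidef.1
  have hNPP : N * P * P = 1 := by
    rw [Matrix.mul_assoc, CFC.sqrt_mul_sqrt_self _ hN.inv.posSemidef.nonneg,
      mul_nonsing_inv _ ((isUnit_iff_isUnit_det N).mp hN.isUnit)]
  have hPMP : (P * M * P).IsHermitian := by
    simp only [IsHermitian, conjTranspose_mul, hP.eq, hM.eq, Matrix.mul_assoc]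
  have hw : (hPMP.eigenvectorBasis 0 : Fin m → ℝ) ≠ 0 := by
    simpa using hPMP.eigenvectorBasis.orthonormal.ne_zero 0
  exact ⟨_, mem_genEig_of_mulVec_eq_smul hNPP hw (hPMP.mulVec_eigenvectorBasis 0)⟩

lemma genEig_subset_Icc (hM : M.PosDef) (hN : N.PosDef) :
    genEig M N ⊆ Set.Icc ((⨅ i, hM.1.eigenvalues i) / ⨆ i, hN.1.eigenvalues i)
      ((⨆ i, hM.1.eigenvalues i) / ⨅ i, hN.1.eigenvalues i) := by
  rintro μ ⟨v, hv, hMv⟩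
  have : Nonempty (Fin m) := (Function.ne_iff.mp hv).nonempty
  have hvv : 0 < v ⬝ᵥ v := by simpa using dotProduct_star_self_pos_iff.mpr hv
  have hMv_pos : 0 < v ⬝ᵥ M *ᵥ v := by simpa using hM.dotProduct_mulVec_pos hv
  have hNv : 0 < v ⬝ᵥ N *ᵥ v := by simpa using hN.dotProduct_mulVec_pos hv
  have hμ : μ = (v ⬝ᵥ M *ᵥ v) / (v ⬝ᵥ N *ᵥ v) := by
    rw [hMv, dotProduct_smul, smul_eq_mul, mul_div_cancel_right₀ _ hNv.ne']
  rw [hμ, ← mul_div_mul_right _ _ hvv.ne', ← mul_div_mul_right (⨆ i, _) _ hvv.ne']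
  exact ⟨div_le_div₀ hMv_pos.le (hM.1.iInf_eigenvalues_mul_dotProduct_le v) hNv
      (hN.1.dotProduct_le_iSup_eigenvalues_mul v),
    div_le_div₀ (mul_pos hM.iSup_eigenvalues_pos hvv).le (hM.1.dotProduct_le_iSup_eigenvalues_mul v)
      (mul_pos hN.iInf_eigenvalues_pos hvv) (hN.1.iInf_eigenvalues_mul_dotProduct_le v)⟩

end genEig

/-- the spectral ratio distance between SPD matrices G and G'' is bounded by
`1 - (b/a)·(b''/a'')` where a, b (resp. a'', b'') are the square roots of the extreme
eigenvalues of G (resp. G''). -/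
theorem dSR_le_eigenvalue_bound {m : ℕ} (hm : 0 < m) (G G'' : Matrix (Fin m) (Fin m) ℝ)
    (hG : G.PosDef) (hG'' : G''.PosDef) :
    dSR G G'' ≤ 1 - (Real.sqrt (⨅ i, hG.1.eigenvalues i) / Real.sqrt (⨆ i, hG.1.eigenvalues i)) *
      (Real.sqrt (⨅ i, hG''.1.eigenvalues i) / Real.sqrt (⨆ i, hG''.1.eigenvalues i)) := by
  have : NeZero m := ⟨hm.ne'⟩
  have hratio := div_le_sInf_div_sSup (genEig_nonempty hG.1 hG'') (genEig_subset_Icc hG hG'')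
    (div_pos hG.iInf_eigenvalues_pos hG''.iSup_eigenvalues_pos)
  rw [dSR, sub_le_sub_iff_left]
  refine le_of_eq_of_le ?_ (Real.sqrt_le_sqrt hratio)
  rw [Real.sqrt_div' _ (div_pos hG.iSup_eigenvalues_pos hG''.iInf_eigenvalues_pos).le,
    Real.sqrt_div' _ hG''.iSup_eigenvalues_pos.le, Real.sqrt_div' _ hG''.iInf_eigenvalues_pos.le,
    div_div_div_eq, div_mul_div_comm, mul_comm (√(⨆ i, hG''.1.eigenvalues i))]
end
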